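/- Let p > 3 be a prime and k an algebraically closed (or arbitrary) field of characteristic p. The Witt algebra W with basis {e_n : -1 ≤ n ≤ p-2} and bracket [e_m, e_n] = (n-m)e_{m+n} is a simple Lie algebra: every nonzero Lie ideal of W equals W. -/

import Mathlib

/-!
`ad e₀` acts diagonally, `e_n` having eigenvalue `n`, and these `p` eigenvalues are distinct in `k`.
A Lagrange interpolation polynomial in `ad e₀` therefore projects any nonzero element of an ideal
onto a single basis vector `e_n`, which then lies in the ideal. Bracketing with `e₋₁` lowers it to
`e₋₁`, as `[e₋₁, e_j] = (j + 1) e_{j-1}` with `0 < j + 1 < p`. Conversely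
`[e_{j+1}, e₋₁] = -(j + 2) e_j` recovers every `e_j` with `j ≤ p - 3`, and
`[e₁, e_{p-3}] = (p - 4) e_{p-2}` the last one; here `p ≠ 4` since the characteristic of a field
is prime.
-/

open scoped BigOperators

/-- The Witt bracket on coordinates with respect to the basis `e_{-1}, e_0, …, e_{p-2}`,
where the index `i : Fin p` encodes `n = i - 1`:  `[e_m, e_n] = (n - m) e_{m+n}`,
with `e_{m+n} := 0` if `m + n` lies outside `{-1, …, p-2}`. -/
def wittBracket (p : ℕ) (k : Type*) [Field k] (x y : Fin p → k) : Fin p → k :=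
  fun i => ∑ a : Fin p, ∑ b : Fin p,
    if (a : ℤ) + (b : ℤ) = (i : ℤ) + 1 then
      ((((b : ℤ) - (a : ℤ)) : ℤ) : k) * x a * y b
    else 0

/-- The basis vector `e_n` of the Witt algebra (zero if `n ∉ {-1, …, p-2}`). -/
def wittE (p : ℕ) (k : Type*) [Field k] (n : ℤ) : Fin p → k :=
  fun i => if (i : ℤ) = n + 1 then 1 else 0

open Polynomial in
theorem Submodule.eval_mul_mem_of_mul_mem {ι k : Type*} [Field k] (I : Submodule k (ι → k))
    {d : ι → k} (hd : ∀ y ∈ I, d * y ∈ I) (q : k[X]) {y : ι → k} (hy : y ∈ I) :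
    (fun i => q.eval (d i)) * y ∈ I := by
  induction q using Polynomial.induction_on with
  | C a =>
    convert I.smul_mem a hy using 1
    ext i
    simp
  | add q r hq hr =>
    convert I.add_mem hq hr using 1
    ext i
    simp [add_mul]
  | monomial n a ih =>
    convert hd _ ih using 1
    ext i
    simp only [eval_mul, eval_C, eval_pow, eval_X, Pi.mul_apply]
    ring

theorem Submodule.single_mem_of_mul_mem {ι k : Type*} [Fintype ι] [DecidableEq ι] [Field k]
    (I : Submodule k (ι → k)) {d : ι → k} (hinj : Function.Injective d)
    (hd : ∀ y ∈ I, d * y ∈ I) {y : ι → k} (hy : y ∈ I) (i : ι) : Pi.single i (y i) ∈ I := by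
  convert I.eval_mul_mem_of_mul_mem hd (Lagrange.basis Finset.univ d i) hy using 1
  ext j
  rcases eq_or_ne i j with rfl | hij
  · simp [Lagrange.eval_basis_self hinj.injOn (Finset.mem_univ i)]
  · simp [Lagrange.eval_basis_of_ne hij (Finset.mem_univ j), hij.symm]

theorem Submodule.eq_top_of_forall_single_mem {ι k : Type*} [Finite ι] [DecidableEq ι] [Field k]
    (I : Submodule k (ι → k)) (h : ∀ i, Pi.single i 1 ∈ I) : I = ⊤ := by
  rw [eq_top_iff, ← (Pi.basisFun k ι).span_eq, Submodule.span_le]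
  rintro _ ⟨i, rfl⟩
  simpa using h i

section CharP

variable (k : Type*) [Field k] (p : ℕ) [CharP k p]

theorem CharP.intCast_ne_zero_of_natAbs_lt {t : ℤ} (ht : t ≠ 0) (htp : t.natAbs < p) :
    (t : k) ≠ 0 := fun h =>
  ht (Int.eq_zero_of_dvd_of_natAbs_lt_natAbs ((CharP.intCast_eq_zero_iff k p t).mp h) htp)

theorem CharP.natCast_sub_one_injective :
    Function.Injective fun i : Fin p => ((i : ℕ) : k) - 1 := fun i j h =>
  Fin.ext (CharP.natCast_injOn_Iio k p i.isLt j.isLt (sub_left_injective h))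

end CharP

section Witt

variable {p : ℕ} {k : Type*} [Field k]

theorem wittE_eq_single {n : ℤ} (i : Fin p) (hi : (i : ℤ) = n + 1) :
    wittE p k n = Pi.single i 1 := by
  ext j
  simp only [wittE, Pi.single_apply, ← hi, Fin.val_inj, Nat.cast_inj]

theorem wittBracket_single_apply (a : Fin p) (y : Fin p → k) (i : Fin p) :
    wittBracket p k (Pi.single a 1) y i =
      ∑ b : Fin p, if (a : ℤ) + b = i + 1 then ((b - a : ℤ) : k) * y b else 0 := by
  rw [wittBracket, Fintype.sum_eq_single a fun a' ha' => by simp [ha']]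
  simp

theorem wittBracket_wittE_wittE {m n : ℤ} (hm : -1 ≤ m) (hm' : m ≤ p - 2)
    (hn : -1 ≤ n) (hn' : n ≤ p - 2) :
    wittBracket p k (wittE p k m) (wittE p k n) = ((n - m : ℤ) : k) • wittE p k (m + n) := by
  have ha : (((m + 1).toNat : ℕ) : ℤ) = m + 1 := by omega
  have hb : (((n + 1).toNat : ℕ) : ℤ) = n + 1 := by omega
  rw [wittE_eq_single (k := k) ⟨(m + 1).toNat, by omega⟩ ha,
    wittE_eq_single (k := k) ⟨(n + 1).toNat, by omega⟩ hb]
  ext i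
  rw [wittBracket_single_apply, Fintype.sum_eq_single ⟨(n + 1).toNat, by omega⟩
    fun b hb => by simp [hb]]
  simp only [ha, hb, wittE, Pi.single_eq_same, Pi.smul_apply, smul_eq_mul, mul_ite, mul_one,
    mul_zero]
  congr 1
  · rw [eq_iff_iff]
    omega
  · push_cast; ring

theorem wittBracket_wittE_zero (hp : 1 < p) (y : Fin p → k) :
    wittBracket p k (wittE p k 0) y = (fun i : Fin p => ((i : ℕ) : k) - 1) * y := by
  ext i
  rw [wittE_eq_single (k := k) ⟨1, hp⟩ (by simp), wittBracket_single_apply,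
    Fintype.sum_eq_single i fun b hb => if_neg (by simp; omega)]
  simp [add_comm]

def IsWittIdeal (I : Submodule k (Fin p → k)) : Prop :=
  ∀ x y : Fin p → k, y ∈ I → wittBracket p k x y ∈ I

namespace IsWittIdeal

variable [CharP k p] {I : Submodule k (Fin p → k)}

theorem wittE_mem_of_bracket (hI : IsWittIdeal I) {m n l : ℤ} (hm : -1 ≤ m) (hm' : m ≤ p - 2)
    (hn : -1 ≤ n) (hn' : n ≤ p - 2) (hl : m + n = l) (hnm : n ≠ m) (hnm' : (n - m).natAbs < p)
    (h : wittE p k n ∈ I) : wittE p k l ∈ I := by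
  have hb := hI (wittE p k m) _ h
  rw [wittBracket_wittE_wittE hm hm' hn hn', hl] at hb
  exact (I.smul_mem_iff (CharP.intCast_ne_zero_of_natAbs_lt k p (sub_ne_zero.mpr hnm) hnm')).mp hb

theorem exists_wittE_mem (hI : IsWittIdeal I) (hp : 1 < p) (hne : I ≠ ⊥) :
    ∃ n : ℤ, -1 ≤ n ∧ n ≤ p - 2 ∧ wittE p k n ∈ I := by
  obtain ⟨y, hy, hy0⟩ := (Submodule.ne_bot_iff I).mp hne
  obtain ⟨i, hi⟩ := Function.ne_iff.mp hy0
  have hsingle := I.single_mem_of_mul_mem (CharP.natCast_sub_one_injective k p)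
    (fun z hz => wittBracket_wittE_zero hp z ▸ hI _ z hz) hy i
  refine ⟨(i : ℤ) - 1, by omega, by omega, ?_⟩
  rw [wittE_eq_single i (by ring), ← I.smul_mem_iff hi, ← Pi.single_smul, smul_eq_mul, mul_one]
  exact hsingle

theorem wittE_neg_one_mem (hI : IsWittIdeal I) {n : ℤ} (hn : -1 ≤ n) (hn' : n ≤ p - 2)
    (h : wittE p k n ∈ I) : wittE p k (-1) ∈ I := by
  induction n, hn using Int.leInduction with
  | base => exact h
  | succ n hn ih =>
    exact ih (by omega) (hI.wittE_mem_of_bracket (m := -1) (n := n + 1) le_rfl (by omega)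
      (by omega) hn' (by ring) (by omega) (by omega) h)

theorem wittE_mem_of_wittE_neg_one_mem (hI : IsWittIdeal I) (hp : 4 < p)
    (h : wittE p k (-1) ∈ I) {n : ℤ} (hn : -1 ≤ n) (hn' : n ≤ p - 2) : wittE p k n ∈ I := by
  have hlow : ∀ j : ℤ, -1 ≤ j → j ≤ p - 3 → wittE p k j ∈ I := fun j hj hj' =>
    hI.wittE_mem_of_bracket (m := j + 1) (by omega) (by omega) le_rfl (by omega) (by ring)
      (by omega) (by omega) h
  rcases lt_or_eq_of_le hn' with hn' | rfl
  · exact hlow n hn (by omega)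
  · exact hI.wittE_mem_of_bracket (m := 1) (n := p - 3) (by omega) (by omega) (by omega)
      (by omega) (by ring) (by omega) (by omega) (hlow _ (by omega) le_rfl)

end IsWittIdeal

end Witt

theorem witt_isSimple_general (p : ℕ) (hp : 3 < p) (k : Type*) [Field k] [CharP k p] :
    ∀ I : Submodule k (Fin p → k),
      (∀ x y : Fin p → k, y ∈ I → wittBracket p k x y ∈ I) → I ≠ ⊥ → I = ⊤ := by
  intro I (hI : IsWittIdeal I) hne
  have hp4 : p ≠ 4 := by
    rintro rfl
    exact absurd (CharP.char_is_prime_of_two_le k 4 (by norm_num)) (by norm_num)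
  obtain ⟨n, hn, hn', hmem⟩ := hI.exists_wittE_mem (by omega) hne
  have hneg := hI.wittE_neg_one_mem hn hn' hmem
  refine I.eq_top_of_forall_single_mem fun i => ?_
  rw [← wittE_eq_single i (n := (i : ℤ) - 1) (by ring)]
  exact hI.wittE_mem_of_wittE_neg_one_mem (by omega) hneg (by omega) (by omega)

/-- The Witt algebra over a field of characteristic `p > 3` is simple:
every nonzero Lie ideal is the whole algebra. -/
theorem witt_isSimple (p : ℕ) [Fact p.Prime] (hp : 3 < p) (k : Type*) [Field k] [CharP k p] :
    ∀ I : Submodule k (Fin p → k),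
      (∀ x y : Fin p → k, y ∈ I → wittBracket p k x y ∈ I) → I ≠ ⊥ → I = ⊤ :=
  witt_isSimple_general p hp k
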